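/- arXiv:1801.02126 — 2 statements merged into one kernel-verified Lean document; each statement's English description precedes it below -/
import Mathlib

section
/- For κ > 0 and m > 0, setting r = √(2/3)·κ^{-1/2}, the two quantities α₁² = m/(4r³(1-κr²)^{3/2}) and α₂² = 2m(1 - κρ²/2)/(ρ³(1-κρ²/4)^{3/2}(1-κr²)) with ρ² = 2r² are equal, and both are positive. -/
/-!
On the circle of radius `r = √(2/(3κ))` one has `κ r² = 2/3`, so `1 - κ r² = 1 - κ ρ²/2 = 1/3` and
`1 - κ ρ²/4 = 2/3`. Combining the `3/2`-powers, both denominators become multiples of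
`y^{3/2}` with `y = r²/3`: the heavy one is `4 (r² · 1/3)^{3/2}`, the massless one is
`(ρ² · 2/3)^{3/2} = (4y)^{3/2} = 8 y^{3/2}`, and the extra factor `2` in the numerator of `α₂²`
makes the two quotients agree.
-/

open Real

namespace Real

theorem sq_rpow_three_halves {x : ℝ} (hx : 0 ≤ x) : (x ^ 2) ^ ((3 : ℝ) / 2) = x ^ 3 := by
  rw [← rpow_natCast x 2, ← rpow_mul hx]
  norm_num

theorem four_mul_rpow_three_halves {y : ℝ} (hy : 0 ≤ y) :
    (4 * y) ^ ((3 : ℝ) / 2) = 8 * y ^ ((3 : ℝ) / 2) := by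
  rw [mul_rpow (by norm_num) hy, show (4 : ℝ) = 2 ^ 2 by norm_num,
    sq_rpow_three_halves (by norm_num)]
  norm_num

theorem mul_sq_sqrt_mul_inv_rpow_half {a κ : ℝ} (ha : 0 ≤ a) (hκ : 0 < κ) :
    κ * (√a * κ⁻¹ ^ ((1 : ℝ) / 2)) ^ 2 = a := by
  rw [mul_pow, sq_sqrt ha, ← rpow_natCast (κ⁻¹ ^ _) 2, ← rpow_mul (inv_pos.mpr hκ).le]
  norm_num
  field_simp

end Real

section SquareRelativeEquilibrium

variable {κ m r : ℝ}

theorem heavy_angular_velocity_sq_eq (hr : 0 ≤ r) (hκr : κ * r ^ 2 = 2 / 3) :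
    m / (4 * r ^ 3 * (1 - κ * r ^ 2) ^ ((3 : ℝ) / 2)) = m / (4 * (r ^ 2 / 3) ^ ((3 : ℝ) / 2)) := by
  rw [hκr, ← sq_rpow_three_halves hr, mul_assoc, ← mul_rpow (sq_nonneg r) (by norm_num)]
  ring_nf

theorem massless_angular_velocity_sq_eq (hκr : κ * r ^ 2 = 2 / 3) :
    2 * m * (1 - κ * (2 * r ^ 2) / 2) /
        ((2 * r ^ 2) ^ ((3 : ℝ) / 2) * (1 - κ * (2 * r ^ 2) / 4) ^ ((3 : ℝ) / 2) *
          (1 - κ * r ^ 2)) =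
      m / (4 * (r ^ 2 / 3) ^ ((3 : ℝ) / 2)) := by
  have h_half : 1 - κ * (2 * r ^ 2) / 2 = 1 / 3 := by linear_combination -hκr
  have h_quarter : 1 - κ * (2 * r ^ 2) / 4 = 2 / 3 := by linear_combination -hκr / 2
  rw [h_half, h_quarter, hκr, ← mul_rpow (by positivity) (by norm_num),
    show 2 * r ^ 2 * (2 / 3) = 4 * (r ^ 2 / 3) by ring, four_mul_rpow_three_halves (by positivity)]
  field_simp
  ring

end SquareRelativeEquilibrium

theorem square_re_angular_velocities (κ m : ℝ) (hκ : 0 < κ) (hm : 0 < m)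
    (r ρ2 α1sq α2sq : ℝ)
    (hr : r = Real.sqrt (2 / 3) * κ⁻¹ ^ ((1:ℝ)/2))
    (hρ : ρ2 = 2 * r ^ 2)
    (h1 : α1sq = m / (4 * r ^ 3 * (1 - κ * r ^ 2) ^ ((3:ℝ)/2)))
    (h2 : α2sq = 2 * m * (1 - κ * ρ2 / 2) /
      (ρ2 ^ ((3:ℝ)/2) * (1 - κ * ρ2 / 4) ^ ((3:ℝ)/2) * (1 - κ * r ^ 2))) :
    α1sq = α2sq ∧ 0 < α1sq ∧ 0 < α2sq := by
  have hr_pos : 0 < r := hr ▸ by positivity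
  have hκr : κ * r ^ 2 = 2 / 3 := hr ▸ mul_sq_sqrt_mul_inv_rpow_half (by norm_num) hκ
  have hα1 := h1.trans (heavy_angular_velocity_sq_eq hr_pos.le hκr)
  have hα2 := (hρ ▸ h2).trans (massless_angular_velocity_sq_eq hκr)
  have hpos : 0 < m / (4 * (r ^ 2 / 3) ^ ((3 : ℝ) / 2)) := by positivity
  exact ⟨hα1.trans hα2.symm, hα1 ▸ hpos, hα2 ▸ hpos⟩
end

section
/- Let κ < 0 and let Q(x) = a₁₂x¹² + a₁₁x¹¹ + ... + a₁x + a₀ be the real polynomial with coefficients aⱼ = cⱼ·κ^j, where c₁₂ = 6697290145/16777216, c₁₁ = -2884257825/524288, c₁₀ = 18063189465/524288, c₉ = -4241985935/32768, c₈ = 21267471735/65536, c₇ = -584429805/1024, c₆ = 737853351/1024, c₅ = -41995431/64, c₄ = 109080063/256, c₃ = -1530101/8, c₂ = 446217/8, c₁ = -9318, c₀ = 649. Then every coefficient aⱼ of Q is positive, and hence Q has no positive real root. -/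
theorem kite_polynomial_coeffs_positive_hyperbolic (κ : ℝ) (hκ : κ < 0) :
    (0 < (6697290145 / 16777216 : ℝ) * κ ^ 12) ∧
    (0 < (-2884257825 / 524288 : ℝ) * κ ^ 11) ∧
    (0 < (18063189465 / 524288 : ℝ) * κ ^ 10) ∧
    (0 < (-4241985935 / 32768 : ℝ) * κ ^ 9) ∧
    (0 < (21267471735 / 65536 : ℝ) * κ ^ 8) ∧
    (0 < (-584429805 / 1024 : ℝ) * κ ^ 7) ∧
    (0 < (737853351 / 1024 : ℝ) * κ ^ 6) ∧
    (0 < (-41995431 / 64 : ℝ) * κ ^ 5) ∧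
    (0 < (109080063 / 256 : ℝ) * κ ^ 4) ∧
    (0 < (-1530101 / 8 : ℝ) * κ ^ 3) ∧
    (0 < (446217 / 8 : ℝ) * κ ^ 2) ∧
    (0 < (-9318 : ℝ) * κ) ∧
    (0 < (649 : ℝ)) ∧
    ∀ x : ℝ, 0 < x →
      (6697290145 / 16777216 : ℝ) * κ ^ 12 * x ^ 12 +
      (-2884257825 / 524288 : ℝ) * κ ^ 11 * x ^ 11 +
      (18063189465 / 524288 : ℝ) * κ ^ 10 * x ^ 10 +
      (-4241985935 / 32768 : ℝ) * κ ^ 9 * x ^ 9 +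
      (21267471735 / 65536 : ℝ) * κ ^ 8 * x ^ 8 +
      (-584429805 / 1024 : ℝ) * κ ^ 7 * x ^ 7 +
      (737853351 / 1024 : ℝ) * κ ^ 6 * x ^ 6 +
      (-41995431 / 64 : ℝ) * κ ^ 5 * x ^ 5 +
      (109080063 / 256 : ℝ) * κ ^ 4 * x ^ 4 +
      (-1530101 / 8 : ℝ) * κ ^ 3 * x ^ 3 +
      (446217 / 8 : ℝ) * κ ^ 2 * x ^ 2 +
      (-9318 : ℝ) * κ * x + 649 ≠ 0 := by
  have hev : ∀ n : ℕ, Even n → 0 < κ ^ n := fun n hn => hn.pow_pos (ne_of_lt hκ)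
  have hod : ∀ n : ℕ, Odd n → κ ^ n < 0 := fun n hn => hn.pow_neg hκ
  have h12 : 0 < (6697290145 / 16777216 : ℝ) * κ ^ 12 :=
    mul_pos (by norm_num) (hev 12 (by decide))
  have h11 : 0 < (-2884257825 / 524288 : ℝ) * κ ^ 11 :=
    mul_pos_of_neg_of_neg (by norm_num) (hod 11 (by decide))
  have h10 : 0 < (18063189465 / 524288 : ℝ) * κ ^ 10 :=
    mul_pos (by norm_num) (hev 10 (by decide))
  have h9 : 0 < (-4241985935 / 32768 : ℝ) * κ ^ 9 :=
    mul_pos_of_neg_of_neg (by norm_num) (hod 9 (by decide))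
  have h8 : 0 < (21267471735 / 65536 : ℝ) * κ ^ 8 :=
    mul_pos (by norm_num) (hev 8 (by decide))
  have h7 : 0 < (-584429805 / 1024 : ℝ) * κ ^ 7 :=
    mul_pos_of_neg_of_neg (by norm_num) (hod 7 (by decide))
  have h6 : 0 < (737853351 / 1024 : ℝ) * κ ^ 6 :=
    mul_pos (by norm_num) (hev 6 (by decide))
  have h5 : 0 < (-41995431 / 64 : ℝ) * κ ^ 5 :=
    mul_pos_of_neg_of_neg (by norm_num) (hod 5 (by decide))
  have h4 : 0 < (109080063 / 256 : ℝ) * κ ^ 4 :=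
    mul_pos (by norm_num) (hev 4 (by decide))
  have h3 : 0 < (-1530101 / 8 : ℝ) * κ ^ 3 :=
    mul_pos_of_neg_of_neg (by norm_num) (hod 3 (by decide))
  have h2 : 0 < (446217 / 8 : ℝ) * κ ^ 2 :=
    mul_pos (by norm_num) (hev 2 (by decide))
  have h1 : 0 < (-9318 : ℝ) * κ := mul_pos_of_neg_of_neg (by norm_num) hκ
  refine ⟨h12, h11, h10, h9, h8, h7, h6, h5, h4, h3, h2, h1, by norm_num, ?_⟩
  intro x hx
  have t12 := mul_pos h12 (pow_pos hx 12)
  have t11 := mul_pos h11 (pow_pos hx 11)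
  have t10 := mul_pos h10 (pow_pos hx 10)
  have t9 := mul_pos h9 (pow_pos hx 9)
  have t8 := mul_pos h8 (pow_pos hx 8)
  have t7 := mul_pos h7 (pow_pos hx 7)
  have t6 := mul_pos h6 (pow_pos hx 6)
  have t5 := mul_pos h5 (pow_pos hx 5)
  have t4 := mul_pos h4 (pow_pos hx 4)
  have t3 := mul_pos h3 (pow_pos hx 3)
  have t2 := mul_pos h2 (pow_pos hx 2)
  have t1 := mul_pos h1 hx
  have : 0 < (6697290145 / 16777216 : ℝ) * κ ^ 12 * x ^ 12 +
      (-2884257825 / 524288 : ℝ) * κ ^ 11 * x ^ 11 +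
      (18063189465 / 524288 : ℝ) * κ ^ 10 * x ^ 10 +
      (-4241985935 / 32768 : ℝ) * κ ^ 9 * x ^ 9 +
      (21267471735 / 65536 : ℝ) * κ ^ 8 * x ^ 8 +
      (-584429805 / 1024 : ℝ) * κ ^ 7 * x ^ 7 +
      (737853351 / 1024 : ℝ) * κ ^ 6 * x ^ 6 +
      (-41995431 / 64 : ℝ) * κ ^ 5 * x ^ 5 +
      (109080063 / 256 : ℝ) * κ ^ 4 * x ^ 4 +
      (-1530101 / 8 : ℝ) * κ ^ 3 * x ^ 3 +
      (446217 / 8 : ℝ) * κ ^ 2 * x ^ 2 +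
      (-9318 : ℝ) * κ * x + 649 := by linarith
  exact ne_of_gt this
end
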